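/- arXiv:2412.18556 — 2 statements merged into one kernel-verified Lean document; each statement's English description precedes it below -/
import Mathlib

section
/- Let A, B, X be nonempty finite types and k ≥ 1 an integer. Let ρ̄ be a quantum state on A, (E^x)_{x∈X} a POVM on A, and (F^x)_{x∈X} a POVM on B; set Λ := Σ_{x∈X} E^x ⊗ F^x, and for each x define F^{x,1} := F^x and F^{x,0} := I_B − F^x. Let s be the positive semidefinite square root of ρ̄. For v∈{0,1}^k define Q^v := (sᵀ ⊗ I_{B^{⊗k}}) · (Σ_{x∈X} E^x ⊗ (⊗_{i=1}^{k} F^{x,v_i})) · (sᵀ ⊗ I_{B^{⊗k}}) on A⊗B^{⊗k}. Then: (i) Σ_{v∈{0,1}^k} Q^v = ρ̄ᵀ ⊗ I_{B^{⊗k}}; (ii) each Q^v is positive semidefinite; (iii) for every permutation π of {1,…,k}, conjugating Q^{(v_{π(1)},…,v_{π(k)})} by the permutation unitary W^π on the B-factors yields Q^{(v_1,…,v_k)}; (iv) for every v and every i∈{1,…,k}, the partial transpose of Q^v on the first i B-factors is positive semidefinite; (v) for every (v_1,…,v_{k−1})∈{0,1}^{k−1}, Σ_{v_k∈{0,1}}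 Tr_A[Q^{(v_1,…,v_k)}] = (1/|B|) Σ_{v_k∈{0,1}} Tr_{A,B_k}[Q^{(v_1,…,v_k)}] ⊗ I_{B_k}; and (vi) Σ_{v: v_1=1} Q^v = (sᵀ⊗I_B) Λ (sᵀ⊗I_B) ⊗ I_{B^{⊗(k−1)}}. -/
open Matrix Kronecker ComplexOrder

lemma posSemidef_sum' {n R ι : Type} [Fintype n] [CommRing R] [PartialOrder R]
    [StarRing R] [AddLeftMono R] (s : Finset ι) (f : ι → Matrix n n R)
    (h : ∀ i ∈ s, (f i).PosSemidef) : (∑ i ∈ s, f i).PosSemidef :=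
  Finset.sum_induction f _ (fun _ _ ha hb => ha.add hb) Matrix.PosSemidef.zero h

open scoped MatrixOrder in
lemma Matrix.posSemidef_iff_eq_transpose_mul_self {n : Type} [Fintype n] [DecidableEq n]
    {M : Matrix n n ℂ} : M.PosSemidef ↔ ∃ C : Matrix n n ℂ, M = Cᴴ * C := by
  refine ⟨fun hM => ?_, fun ⟨C, hC⟩ => hC ▸ Matrix.posSemidef_conjTranspose_mul_self C⟩
  have h0 : 0 ≤ M := Matrix.nonneg_iff_posSemidef.2 hM
  refine ⟨CFC.sqrt M, ?_⟩
  have hs : (CFC.sqrt M)ᴴ = CFC.sqrt M := (CFC.sqrt_nonneg M).isSelfAdjoint.star_eq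
  rw [hs, CFC.sqrt_mul_sqrt_self M h0]

lemma piKron_posSemidef {A B ι : Type} [Fintype A] [DecidableEq A]
    [Fintype B] [DecidableEq B] [Fintype ι] [DecidableEq ι]
    (E : Matrix A A ℂ) (hE : E.PosSemidef)
    (G : ι → Matrix B B ℂ) (hG : ∀ i, (G i).PosSemidef) :
    (Matrix.of fun (p q : A × (ι → B)) =>
      E p.1 q.1 * ∏ i, G i (p.2 i) (q.2 i)).PosSemidef := by
  obtain ⟨C, hC⟩ := Matrix.posSemidef_iff_eq_transpose_mul_self.1 hE
  choose D hD using fun i => Matrix.posSemidef_iff_eq_transpose_mul_self.1 (hG i)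
  have key : (Matrix.of fun (p q : A × (ι → B)) =>
      E p.1 q.1 * ∏ i, G i (p.2 i) (q.2 i)) =
      (Matrix.of fun (r p : A × (ι → B)) =>
        C r.1 p.1 * ∏ i, D i (r.2 i) (p.2 i))ᴴ *
      (Matrix.of fun (r p : A × (ι → B)) =>
        C r.1 p.1 * ∏ i, D i (r.2 i) (p.2 i)) := by
    ext p q
    have hprod : (∏ i, G i (p.2 i) (q.2 i)) =
        ∑ h : ι → B, ∏ i, (star (D i (h i) (p.2 i)) * D i (h i) (q.2 i)) := by
      have : (∏ i, G i (p.2 i) (q.2 i)) =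
          ∏ i, ∑ c, (star (D i c (p.2 i)) * D i c (q.2 i)) := by
        refine Finset.prod_congr rfl fun i _ => ?_
        rw [hD i]; simp [Matrix.mul_apply, Matrix.conjTranspose_apply]
      rw [this, Finset.prod_univ_sum, Fintype.piFinset_univ]
    have hE' : E p.1 q.1 = ∑ a, star (C a p.1) * C a q.1 := by
      rw [hC]; simp [Matrix.mul_apply, Matrix.conjTranspose_apply]
    simp only [Matrix.mul_apply, Matrix.conjTranspose_apply, Matrix.of_apply,
      Fintype.sum_prod_type, hprod, hE', star_mul', Finset.sum_mul, Finset.mul_sum]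
    rw [Finset.sum_comm]
    refine Finset.sum_congr rfl fun a _ => Finset.sum_congr rfl fun h _ => ?_
    rw [Finset.prod_mul_distrib, star_prod]
    ring
  rw [key]
  exact Matrix.posSemidef_conjTranspose_mul_self _

lemma sandwich_apply {A C : Type} [Fintype A] [DecidableEq A]
    [Fintype C] [DecidableEq C] (s : Matrix A A ℂ)
    (N : Matrix (A × C) (A × C) ℂ) (p q : A × C) :
    ((Matrix.of fun (p q : A × C) => s p.1 q.1 * (if p.2 = q.2 then (1:ℂ) else 0)) * N *
     (Matrix.of fun (p q : A × C) => s p.1 q.1 * (if p.2 = q.2 then (1:ℂ) else 0))) p q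
    = ∑ a : A, ∑ a' : A, s p.1 a * N (a, p.2) (a', q.2) * s a' q.1 := by
  simp only [Matrix.mul_apply, Matrix.of_apply, Fintype.sum_prod_type]
  simp [mul_ite, ite_mul, zero_mul, mul_zero, Finset.sum_ite_eq, Finset.sum_ite_eq',
    Finset.mul_sum, Finset.sum_mul, mul_assoc]
  exact Finset.sum_comm

lemma deltaKron_mul {A C : Type} [Fintype A] [DecidableEq A]
    [Fintype C] [DecidableEq C] (s₁ s₂ : Matrix A A ℂ) :
    (Matrix.of fun (p q : A × C) => s₁ p.1 q.1 * (if p.2 = q.2 then (1:ℂ) else 0)) *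
    (Matrix.of fun (p q : A × C) => s₂ p.1 q.1 * (if p.2 = q.2 then (1:ℂ) else 0)) =
    Matrix.of fun (p q : A × C) => (s₁ * s₂) p.1 q.1 * (if p.2 = q.2 then (1:ℂ) else 0) := by
  ext p q
  simp [Matrix.mul_apply, Fintype.sum_prod_type, mul_ite, ite_mul, zero_mul, mul_zero,
    Finset.sum_ite_eq, Finset.sum_ite_eq', Finset.mul_sum, Finset.sum_mul, mul_assoc]

lemma prod_delta {ι B : Type} [Fintype ι] [DecidableEq B] (f g : ι → B) :
    (∏ j, (if f j = g j then (1:ℂ) else 0)) = if f = g then 1 else 0 := by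
  by_cases h : f = g
  · simp [h]
  · obtain ⟨j, hj⟩ := Function.ne_iff.1 h
    rw [if_neg h]
    exact Finset.prod_eq_zero (Finset.mem_univ j) (by simp [hj])

/-- The operators `Q^v = (sᵀ ⊗ I) (Σ_x E^x ⊗ (⊗_i F^{x,v_i})) (sᵀ ⊗ I)` built from a
one-way-LOCC test satisfy all the constraints of the `k`-PPT-extendible SDP. -/
theorem LO_test_gives_feasible_SDP_point
    (A B X : Type) [Fintype A] [DecidableEq A] [Nonempty A]
    [Fintype B] [DecidableEq B] [Nonempty B]
    [Fintype X] [Nonempty X]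
    (k : ℕ) (hk : 1 ≤ k)
    -- a quantum state ρ̄ on A and its positive semidefinite square root s
    (ρbar : Matrix A A ℂ) (hρpos : ρbar.PosSemidef) (hρtr : ρbar.trace = 1)
    (s : Matrix A A ℂ) (hspos : s.PosSemidef) (hssq : s * s = ρbar)
    -- POVMs (E^x) on A and (F^x) on B
    (E : X → Matrix A A ℂ)
    (hEpos : ∀ x, (E x).PosSemidef) (hEsum : ∑ x, E x = 1)
    (F : X → Matrix B B ℂ)
    (hFpos : ∀ x, (F x).PosSemidef) (hFsum : ∑ x, F x = 1)
    (Λ : Matrix (A × B) (A × B) ℂ) (hΛ : Λ = ∑ x, E x ⊗ₖ F x)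
    -- the two-outcome POVMs (F^{x,1}, F^{x,0}) on B
    (Fb : X → Fin 2 → Matrix B B ℂ)
    (hFb1 : ∀ x, Fb x 1 = F x) (hFb0 : ∀ x, Fb x 0 = 1 - F x)
    -- sᵀ ⊗ I on A ⊗ B^{⊗k}
    (SA : Matrix (A × (Fin k → B)) (A × (Fin k → B)) ℂ)
    (hSA : SA = Matrix.of fun (p q : A × (Fin k → B)) =>
        sᵀ p.1 q.1 * (if p.2 = q.2 then (1 : ℂ) else 0))
    (Q : (Fin k → Fin 2) → Matrix (A × (Fin k → B)) (A × (Fin k → B)) ℂ)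
    (hQ : ∀ v, Q v = SA * (Matrix.of fun (p q : A × (Fin k → B)) =>
        ∑ x, E x p.1 q.1 * ∏ i, Fb x (v i) (p.2 i) (q.2 i)) * SA) :
    -- (i): Σ_v Q^v = ρ̄ᵀ ⊗ I
    (∑ v : Fin k → Fin 2, Q v =
        Matrix.of fun (p q : A × (Fin k → B)) =>
          ρbarᵀ p.1 q.1 * (if p.2 = q.2 then (1 : ℂ) else 0))
    -- (ii): each Q^v is positive semidefinite
    ∧ (∀ v, (Q v).PosSemidef)
    -- (iii): permutation covariance
    ∧ (∀ v : Fin k → Fin 2, ∀ π : Equiv.Perm (Fin k),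
        (Matrix.of fun (p q : A × (Fin k → B)) =>
          Q (v ∘ π) (p.1, p.2 ∘ π) (q.1, q.2 ∘ π)) = Q v)
    -- (iv): PPT on the first i B-factors
    ∧ (∀ v : Fin k → Fin 2, ∀ i : ℕ, 1 ≤ i → i ≤ k →
        Matrix.PosSemidef (Matrix.of fun (p q : A × (Fin k → B)) =>
          Q v (p.1, fun j => if (j : ℕ) < i then q.2 j else p.2 j)
              (q.1, fun j => if (j : ℕ) < i then p.2 j else q.2 j)))
    -- (v): non-signaling condition on the last B-factor
    ∧ (∀ u : Fin k → Fin 2, ∀ f f' : Fin k → B,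
        (∑ vk : Fin 2, ∑ a : A, Q (Function.update u ⟨k - 1, by omega⟩ vk) (a, f) (a, f'))
          = (Fintype.card B : ℂ)⁻¹
            * (∑ vk : Fin 2, ∑ a : A, ∑ b : B,
                Q (Function.update u ⟨k - 1, by omega⟩ vk)
                  (a, Function.update f ⟨k - 1, by omega⟩ b)
                  (a, Function.update f' ⟨k - 1, by omega⟩ b))
            * (if f ⟨k - 1, by omega⟩ = f' ⟨k - 1, by omega⟩ then 1 else 0))
    -- (vi): Σ_{v : v₁ = 1} Q^v = ((sᵀ⊗I_B) Λ (sᵀ⊗I_B)) ⊗ I_{B^{⊗(k−1)}}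
    ∧ (∑ v ∈ Finset.univ.filter (fun v : Fin k → Fin 2 => v ⟨0, by omega⟩ = 1), Q v
        = Matrix.of fun (p q : A × (Fin k → B)) =>
            ((sᵀ ⊗ₖ (1 : Matrix B B ℂ)) * Λ * (sᵀ ⊗ₖ (1 : Matrix B B ℂ)))
              (p.1, p.2 ⟨0, by omega⟩) (q.1, q.2 ⟨0, by omega⟩)
            * ∏ j ∈ Finset.univ.erase (⟨0, by omega⟩ : Fin k),
                (if p.2 j = q.2 j then (1 : ℂ) else 0)) := by
  -- common facts
  classical
  have hFbpos : ∀ x t, (Fb x t).PosSemidef := by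
    intro x t
    have ht : t = 0 ∨ t = 1 := by omega
    rcases ht with ht | ht <;> subst ht
    · rw [hFb0]
      have h1 : (1 : Matrix B B ℂ) - F x = ∑ y ∈ Finset.univ.erase x, F y := by
        rw [← hFsum, ← Finset.add_sum_erase _ _ (Finset.mem_univ x)]
        abel
      rw [h1]
      exact posSemidef_sum' _ _ fun y _ => hFpos y
    · rw [hFb1]; exact hFpos x
  have hFbsum : ∀ x, Fb x 0 + Fb x 1 = 1 := by
    intro x; rw [hFb0, hFb1]; exact sub_add_cancel 1 (F x)
  have hFb2 : ∀ x (b b' : B), Fb x 0 b b' + Fb x 1 b b' = if b = b' then (1:ℂ) else 0 := by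
    intro x b b'
    have := congrFun (congrFun (hFbsum x) b) b'
    simpa [Matrix.add_apply, Matrix.one_apply] using this
  have Qapply : ∀ v (p q : A × (Fin k → B)), Q v p q =
      ∑ a : A, ∑ a' : A, sᵀ p.1 a *
        (∑ x, E x a a' * ∏ i, Fb x (v i) (p.2 i) (q.2 i)) * sᵀ a' q.1 := by
    intro v p q
    rw [hQ, hSA, sandwich_apply]
    rfl
  have hSAH : SAᴴ = SA := by
    have hs : ∀ a b, star (s a b) = s b a := by
      intro a b
      have := congrFun (congrFun hspos.isHermitian b) a
      simpa [Matrix.conjTranspose_apply] using this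
    rw [hSA]; ext p q
    simp only [Matrix.conjTranspose_apply, Matrix.of_apply, Matrix.transpose_apply, star_mul']
    rw [hs]
    by_cases h : p.2 = q.2 <;> simp [h, eq_comm] <;> ring
  have psd_sandwich : ∀ N : Matrix (A × (Fin k → B)) (A × (Fin k → B)) ℂ,
      N.PosSemidef → (SA * N * SA).PosSemidef := by
    intro N hN
    rw [show SA * N * SA = SAᴴ * N * SA by rw [hSAH]]
    exact hN.conjTranspose_mul_mul_same SA
  have Mpsd : ∀ (G : X → Fin k → Matrix B B ℂ), (∀ x i, (G x i).PosSemidef) →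
      (Matrix.of fun (p q : A × (Fin k → B)) =>
        ∑ x, E x p.1 q.1 * ∏ i, G x i (p.2 i) (q.2 i)).PosSemidef := by
    intro G hG
    have : (Matrix.of fun (p q : A × (Fin k → B)) =>
        ∑ x, E x p.1 q.1 * ∏ i, G x i (p.2 i) (q.2 i)) =
        ∑ x, Matrix.of fun (p q : A × (Fin k → B)) =>
          E x p.1 q.1 * ∏ i, G x i (p.2 i) (q.2 i) := by
      ext p q; simp [Matrix.sum_apply]
    rw [this]
    exact posSemidef_sum' _ _ fun x _ => piKron_posSemidef _ (hEpos x) _ (hG x)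
  refine ⟨?_, ?_, ?_, ?_, ?_, ?_⟩
  · -- (i)
    simp only [hQ]
    rw [← Finset.sum_mul, ← Finset.mul_sum]
    have hMall : (∑ v : Fin k → Fin 2, (Matrix.of fun (p q : A × (Fin k → B)) =>
        ∑ x, E x p.1 q.1 * ∏ i, Fb x (v i) (p.2 i) (q.2 i)))
        = (1 : Matrix (A × (Fin k → B)) (A × (Fin k → B)) ℂ) := by
      ext p q
      simp only [Matrix.sum_apply, Matrix.of_apply]
      rw [Finset.sum_comm]
      have hx : ∀ x, ∑ v : Fin k → Fin 2, E x p.1 q.1 * ∏ i, Fb x (v i) (p.2 i) (q.2 i)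
          = E x p.1 q.1 * (if p.2 = q.2 then 1 else 0) := by
        intro x
        rw [← Finset.mul_sum]
        congr 1
        have h1 : ∑ v : Fin k → Fin 2, ∏ i, Fb x (v i) (p.2 i) (q.2 i)
            = ∏ i, ∑ t : Fin 2, Fb x t (p.2 i) (q.2 i) := by
          rw [Finset.prod_univ_sum, Fintype.piFinset_univ]
        rw [h1, ← prod_delta p.2 q.2]
        refine Finset.prod_congr rfl fun i _ => ?_
        rw [Fin.sum_univ_two, hFb2]
      simp only [hx]
      rw [← Finset.sum_mul]
      have : (∑ x, E x p.1 q.1) = (1 : Matrix A A ℂ) p.1 q.1 := by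
        rw [← hEsum, Matrix.sum_apply]
      rw [this, Matrix.one_apply, Matrix.one_apply]
      by_cases h1 : p.1 = q.1 <;> by_cases h2 : p.2 = q.2 <;>
        simp [h1, h2, Prod.ext_iff]
    rw [hMall, Matrix.mul_one, hSA, deltaKron_mul, ← Matrix.transpose_mul, hssq]
  · -- (ii)
    intro v
    rw [hQ]
    exact psd_sandwich _ (Mpsd (fun x i => Fb x (v i)) (fun x i => hFbpos x (v i)))
  · -- (iii)
    intro v π
    ext p q
    simp only [Matrix.of_apply]
    rw [Qapply, Qapply]
    refine Finset.sum_congr rfl fun a _ => Finset.sum_congr rfl fun a' _ => ?_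
    refine congrArg (· * sᵀ a' q.1) (congrArg (sᵀ p.1 a * ·)
      (Finset.sum_congr rfl fun x _ => congrArg (E x a a' * ·) ?_))
    exact Equiv.prod_comp π fun i => Fb x (v i) (p.2 i) (q.2 i)
  · -- (iv)
    intro v i hi1 hik
    have heq : (Matrix.of fun (p q : A × (Fin k → B)) =>
        Q v (p.1, fun j => if (j : ℕ) < i then q.2 j else p.2 j)
            (q.1, fun j => if (j : ℕ) < i then p.2 j else q.2 j)) =
        SA * (Matrix.of fun (p q : A × (Fin k → B)) =>
          ∑ x, E x p.1 q.1 * ∏ j : Fin k,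
            (if (j:ℕ) < i then (Fb x (v j))ᵀ else Fb x (v j)) (p.2 j) (q.2 j)) * SA := by
      ext p q
      simp only [Matrix.of_apply]
      rw [Qapply, hSA, sandwich_apply]
      refine Finset.sum_congr rfl fun a _ => Finset.sum_congr rfl fun a' _ => ?_
      refine congrArg (· * sᵀ a' q.1) (congrArg (sᵀ p.1 a * ·)
        (Finset.sum_congr rfl fun x _ => congrArg (E x a a' * ·)
          (Finset.prod_congr rfl fun j _ => ?_)))
      by_cases h : (j:ℕ) < i <;> simp [h]
    rw [heq]
    refine psd_sandwich _ (Mpsd _ fun x j => ?_)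
    by_cases h : (j:ℕ) < i
    · simp only [h, if_true]; exact (hFbpos x (v j)).transpose
    · simp only [h, if_false]; exact hFbpos x (v j)
  · -- (v)
    intro u f f'
    have hρ : ∀ a1 a1' : A, ρbar a1 a1' = ∑ a, s a1 a * s a a1' := by
      intro a1 a1'; rw [← hssq, Matrix.mul_apply]
    have Tsum : ∀ (w : Fin k → Fin 2) (g g' : Fin k → B),
        (∑ a : A, Q w (a, g) (a, g')) =
        ∑ x, (∑ a1 : A, ∑ a1' : A, ρbar a1 a1' * E x a1 a1')
          * ∏ j, Fb x (w j) (g j) (g' j) := by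
      intro w g g'
      simp only [Qapply, Matrix.transpose_apply, hρ, Finset.sum_mul, Finset.mul_sum]
      trans (∑ a1 : A, ∑ a1' : A, ∑ x : X, ∑ a : A,
          s a1 a * (E x a1 a1' * ∏ j, Fb x (w j) (g j) (g' j)) * s a a1')
      · rw [Finset.sum_comm]
        refine Finset.sum_congr rfl fun a1 _ => ?_
        rw [Finset.sum_comm]
        refine Finset.sum_congr rfl fun a1' _ => ?_
        rw [Finset.sum_comm]
      · refine Eq.trans (Finset.sum_congr rfl fun a1 _ => Finset.sum_comm) ?_
        refine Eq.trans Finset.sum_comm ?_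
        exact Finset.sum_congr rfl fun x _ => Finset.sum_congr rfl fun a1 _ =>
          Finset.sum_congr rfl fun a1' _ => Finset.sum_congr rfl fun a _ => by ring
    set iL : Fin k := ⟨k - 1, by omega⟩ with hiLdef
    have hsplit : ∀ (x : X) (vk : Fin 2) (g g' : Fin k → B),
        (∏ j, Fb x (Function.update u iL vk j) (g j) (g' j)) =
        Fb x vk (g iL) (g' iL) * ∏ j ∈ Finset.univ.erase iL, Fb x (u j) (g j) (g' j) := by
      intro x vk g g'
      rw [← Finset.mul_prod_erase Finset.univ _ (Finset.mem_univ iL), Function.update_self]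
      refine congrArg _ (Finset.prod_congr rfl fun j hj => ?_)
      rw [Function.update_of_ne (Finset.mem_erase.1 hj).1]
    have hLHS : (∑ vk : Fin 2, ∑ a : A, Q (Function.update u iL vk) (a, f) (a, f'))
        = (if f iL = f' iL then (1:ℂ) else 0) *
          ∑ x, (∑ a1 : A, ∑ a1' : A, ρbar a1 a1' * E x a1 a1')
            * ∏ j ∈ Finset.univ.erase iL, Fb x (u j) (f j) (f' j) := by
      simp only [Tsum, hsplit]
      rw [Finset.sum_comm, Finset.mul_sum]
      refine Finset.sum_congr rfl fun x _ => ?_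
      rw [Fin.sum_univ_two]
      have hd := hFb2 x (f iL) (f' iL)
      calc (∑ a1 : A, ∑ a1' : A, ρbar a1 a1' * E x a1 a1')
              * (Fb x 0 (f iL) (f' iL) * ∏ j ∈ Finset.univ.erase iL, Fb x (u j) (f j) (f' j))
            + (∑ a1 : A, ∑ a1' : A, ρbar a1 a1' * E x a1 a1')
              * (Fb x 1 (f iL) (f' iL) * ∏ j ∈ Finset.univ.erase iL, Fb x (u j) (f j) (f' j))
          = (Fb x 0 (f iL) (f' iL) + Fb x 1 (f iL) (f' iL)) *
            ((∑ a1 : A, ∑ a1' : A, ρbar a1 a1' * E x a1 a1')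
              * ∏ j ∈ Finset.univ.erase iL, Fb x (u j) (f j) (f' j)) := by ring
        _ = _ := by rw [hd]
    have hcard : ∀ x : X, (∑ vk : Fin 2, ∑ b : B, Fb x vk b b) = (Fintype.card B : ℂ) := by
      intro x
      rw [Fin.sum_univ_two, ← Finset.sum_add_distrib]
      simp only [hFb2]
      simp
    have hRHS : (∑ vk : Fin 2, ∑ a : A, ∑ b : B,
          Q (Function.update u iL vk) (a, Function.update f iL b) (a, Function.update f' iL b))
        = (Fintype.card B : ℂ) *
          ∑ x, (∑ a1 : A, ∑ a1' : A, ρbar a1 a1' * E x a1 a1')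
            * ∏ j ∈ Finset.univ.erase iL, Fb x (u j) (f j) (f' j) := by
      have h1 : ∀ (vk : Fin 2) (b : B),
          (∑ a : A, Q (Function.update u iL vk) (a, Function.update f iL b) (a, Function.update f' iL b))
          = ∑ x, (∑ a1 : A, ∑ a1' : A, ρbar a1 a1' * E x a1 a1')
            * (Fb x vk b b * ∏ j ∈ Finset.univ.erase iL, Fb x (u j) (f j) (f' j)) := by
        intro vk b
        rw [Tsum]
        refine Finset.sum_congr rfl fun x _ => ?_
        rw [hsplit]
        simp only [Function.update_self]
        refine congrArg _ (congrArg _ (Finset.prod_congr rfl fun j hj => ?_))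
        rw [Function.update_of_ne (Finset.mem_erase.1 hj).1,
          Function.update_of_ne (Finset.mem_erase.1 hj).1]
      calc (∑ vk : Fin 2, ∑ a : A, ∑ b : B,
              Q (Function.update u iL vk) (a, Function.update f iL b) (a, Function.update f' iL b))
          = ∑ vk : Fin 2, ∑ b : B, ∑ a : A,
              Q (Function.update u iL vk) (a, Function.update f iL b) (a, Function.update f' iL b) :=
            Finset.sum_congr rfl fun vk _ => Finset.sum_comm
        _ = ∑ vk : Fin 2, ∑ b : B, ∑ x, (∑ a1 : A, ∑ a1' : A, ρbar a1 a1' * E x a1 a1')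
              * (Fb x vk b b * ∏ j ∈ Finset.univ.erase iL, Fb x (u j) (f j) (f' j)) := by
            simp only [h1]
        _ = ∑ x, ∑ vk : Fin 2, ∑ b : B, (∑ a1 : A, ∑ a1' : A, ρbar a1 a1' * E x a1 a1')
              * (Fb x vk b b * ∏ j ∈ Finset.univ.erase iL, Fb x (u j) (f j) (f' j)) :=
            Eq.trans (Finset.sum_congr rfl fun vk _ => Finset.sum_comm) Finset.sum_comm
        _ = ∑ x, (∑ vk : Fin 2, ∑ b : B, Fb x vk b b) *
              ((∑ a1 : A, ∑ a1' : A, ρbar a1 a1' * E x a1 a1')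
              * ∏ j ∈ Finset.univ.erase iL, Fb x (u j) (f j) (f' j)) := by
            refine Finset.sum_congr rfl fun x _ => ?_
            rw [Finset.sum_mul]
            refine Finset.sum_congr rfl fun vk _ => ?_
            rw [Finset.sum_mul]
            exact Finset.sum_congr rfl fun b _ => by ring
        _ = _ := by
            rw [Finset.mul_sum]
            refine Finset.sum_congr rfl fun x _ => ?_
            rw [hcard]
    rw [hLHS, hRHS]
    have hB : (Fintype.card B : ℂ) ≠ 0 := Nat.cast_ne_zero.2 Fintype.card_ne_zero
    field_simp
  · -- (vi)
    set i0 : Fin k := ⟨0, by omega⟩ with hi0def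
    simp only [hQ]
    rw [← Finset.sum_mul, ← Finset.mul_sum]
    have hMf : (∑ v ∈ Finset.univ.filter (fun v : Fin k → Fin 2 => v i0 = 1),
        (Matrix.of fun (p q : A × (Fin k → B)) =>
          ∑ x, E x p.1 q.1 * ∏ i, Fb x (v i) (p.2 i) (q.2 i)))
        = Matrix.of fun (p q : A × (Fin k → B)) => ∑ x, E x p.1 q.1 *
            (F x (p.2 i0) (q.2 i0) *
              ∏ j ∈ Finset.univ.erase i0, (if p.2 j = q.2 j then (1:ℂ) else 0)) := by
      ext p q
      simp only [Matrix.sum_apply, Matrix.of_apply]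
      rw [Finset.sum_comm]
      refine Finset.sum_congr rfl fun x _ => ?_
      rw [← Finset.mul_sum]
      congr 1
      rw [Finset.sum_filter]
      set g : Fin k → Fin 2 → ℂ := fun j t => if j = i0 then
          (if t = 1 then Fb x 1 (p.2 j) (q.2 j) else 0)
          else Fb x t (p.2 j) (q.2 j) with hg
      have hterm : ∀ v : Fin k → Fin 2, (if v i0 = 1 then ∏ i, Fb x (v i) (p.2 i) (q.2 i) else 0)
          = ∏ i, g i (v i) := by
        intro v
        by_cases hv : v i0 = 1
        · rw [if_pos hv]
          refine Finset.prod_congr rfl fun j _ => ?_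
          by_cases hj : j = i0
          · subst hj; simp [hg, hv]
          · simp [hg, hj]
        · rw [if_neg hv]
          symm
          refine Finset.prod_eq_zero (Finset.mem_univ i0) ?_
          simp [hg, hv]
      rw [Finset.sum_congr rfl fun v _ => hterm v]
      have hswap := Finset.prod_univ_sum (fun _ : Fin k => (Finset.univ : Finset (Fin 2))) g
      rw [Fintype.piFinset_univ] at hswap
      rw [← hswap, ← Finset.mul_prod_erase Finset.univ _ (Finset.mem_univ i0)]
      congr 1
      · rw [Fin.sum_univ_two]; simp [hg, hFb1]
      · refine Finset.prod_congr rfl fun j hj => ?_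
        have hj' := (Finset.mem_erase.1 hj).1
        rw [Fin.sum_univ_two]
        simp only [hg, hj', if_false]
        exact hFb2 x _ _
    rw [hMf, hSA]
    have hK : (sᵀ ⊗ₖ (1 : Matrix B B ℂ)) * Λ * (sᵀ ⊗ₖ (1 : Matrix B B ℂ))
        = ∑ x, (sᵀ * E x * sᵀ) ⊗ₖ F x := by
      rw [hΛ, Finset.mul_sum, Finset.sum_mul]
      refine Finset.sum_congr rfl fun x _ => ?_
      rw [← Matrix.mul_kronecker_mul, ← Matrix.mul_kronecker_mul, Matrix.one_mul, Matrix.mul_one]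
    ext p q
    rw [sandwich_apply]
    simp only [Matrix.of_apply]
    rw [hK]
    simp only [Matrix.sum_apply, Matrix.kroneckerMap_apply,
      Matrix.mul_apply, Matrix.transpose_apply, Finset.sum_mul, Finset.mul_sum]
    refine Eq.trans (Eq.trans (Finset.sum_congr rfl fun a _ => Finset.sum_comm) Finset.sum_comm) ?_
    refine Finset.sum_congr rfl fun x _ => ?_
    rw [Finset.sum_comm]
    exact Finset.sum_congr rfl fun a' _ => Finset.sum_congr rfl fun a _ => by ring
end

section
/- Let A, B be nonempty finite types and ε∈[0,1]. Let Γ be a positive semidefinite matrix on A⊗B with Tr_B[Γ] = I_A (the Choi operator of a channel N from A to B). Let M be a nonempty finite set, for each m∈M let ρ^m be a quantum state on A, and let (Λ^m)_{m∈M} be a POVM on B such that Tr[((ρ^m)ᵀ ⊗ Λ^m)·Γ] ≥ 1−ε for every m∈M. Assume ρ̄ := (1/|M|)Σ_{m∈M} ρ^m is positive definite and let s be its positive definite square root. Then there exists a POVM (Θ^m)_{m∈M} on A such that, setting Ω := Σ_{m∈M} Θ^m ⊗ Λ^m, one has both: (i) Tr[Ω·(sᵀ⊗I_B)·Γ·(sᵀ⊗I_B)]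 ≥ 1−ε, and (ii) Tr[Ω·(ρ̄ᵀ ⊗ σ)] = 1/|M| for every complex matrix σ on B with Tr[σ] = 1. Consequently, log₂|M| ≤ D_H^{ε,LO}(N(ψ̄) ‖ ρ̄_R ⊗ σ) for every state σ on B, where ψ̄ is the canonical purification of ρ̄ and D_H^{ε,LO} is the hypothesis-testing relative entropy restricted to tests realizable by local operations. -/
open Matrix Kronecker ComplexOrder


lemma conjT_kron {n m : Type} [Fintype n] [Fintype m]
    (X : Matrix n n ℂ) (Y : Matrix m m ℂ) : (X ⊗ₖ Y)ᴴ = Xᴴ ⊗ₖ Yᴴ := by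
  ext ⟨i,j⟩ ⟨k,l⟩
  simp [conjTranspose_apply, kroneckerMap_apply, mul_comm]

lemma psd_kron {n m : Type} [Fintype n] [Fintype m] [DecidableEq n] [DecidableEq m]
    {X : Matrix n n ℂ} {Y : Matrix m m ℂ} (hX : X.PosSemidef) (hY : Y.PosSemidef) :
    (X ⊗ₖ Y).PosSemidef := by
  exact hX.kronecker hY

lemma psd_trace_nonneg {n : Type} [Fintype n] [DecidableEq n]
    {X : Matrix n n ℂ} (hX : X.PosSemidef) : 0 ≤ X.trace := by
  rw [Matrix.trace]
  apply Finset.sum_nonneg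
  intro i _
  exact hX.diag_nonneg

lemma trace_mul_psd_nonneg {n : Type} [Fintype n] [DecidableEq n]
    {P Q : Matrix n n ℂ} (hP : P.PosSemidef) (hQ : Q.PosSemidef) :
    0 ≤ (P * Q).trace := by
  obtain ⟨b, rfl⟩ : ∃ b : Matrix n n ℂ, Q = star b * b := by
    open scoped MatrixOrder in
    exact CStarAlgebra.nonneg_iff_eq_star_mul_self.mp (Matrix.nonneg_iff_posSemidef.mpr hQ)
  rw [star_eq_conjTranspose, ← Matrix.mul_assoc, Matrix.trace_mul_cycle]
  exact psd_trace_nonneg (hP.mul_mul_conjTranspose_same b)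

lemma psd_smul {n : Type} [Fintype n] {X : Matrix n n ℂ} (hX : X.PosSemidef)
    {c : ℝ} (hc : 0 ≤ c) : ((c : ℂ) • X).PosSemidef := by
  refine ⟨?_, fun x => ?_⟩
  · rw [IsHermitian, conjTranspose_smul, hX.1.eq, Complex.star_def, Complex.conj_ofReal]
  · exact (hX.smul (Complex.zero_le_real.mpr hc)).2 x

lemma psd_add {n : Type} [Fintype n] {X Y : Matrix n n ℂ}
    (hX : X.PosSemidef) (hY : Y.PosSemidef) : (X + Y).PosSemidef := by
  refine ⟨hX.1.add hY.1, fun x => ?_⟩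
  exact (hX.add hY).2 x

lemma psd_sum {n T : Type} [Fintype n] (s : Finset T) (f : T → Matrix n n ℂ)
    (h : ∀ x ∈ s, (f x).PosSemidef) : (∑ x ∈ s, f x).PosSemidef := by
  classical
  induction s using Finset.induction_on with
  | empty => simpa using Matrix.PosSemidef.zero
  | insert a s hx ih =>
    rw [Finset.sum_insert hx]
    exact psd_add (h _ (Finset.mem_insert_self _ _))
      (ih fun x hxs => h x (Finset.mem_insert_of_mem hxs))



open Matrix Kronecker ComplexOrder

/-- Upper bound on the one-shot classical capacity via LO-restricted hypothesis testing:
for any `(|M|, ε)`-code there is a POVM `(Θ^m)` on `A` such that the local test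
`Ω = Σ_m Θ^m ⊗ Λ^m` accepts the channel output of the purification of `ρ̄` with
probability at least `1 − ε`, while it accepts any product state `ρ̄ᵀ ⊗ σ` with
probability exactly `1/|M|`.  Consequently `log₂|M| ≤ D_H^{ε,LO}(N(ψ̄)‖ρ̄⊗σ)`,
i.e. the LO-restricted hypothesis-testing infimum is at most `1/|M|`. -/
theorem one_shot_classical_capacity_LO_bound
    (A B : Type) [Fintype A] [DecidableEq A] [Nonempty A]
    [Fintype B] [DecidableEq B] [Nonempty B]
    (ε : ℝ) (hε0 : 0 ≤ ε) (hε1 : ε ≤ 1)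
    -- the Choi operator of the channel N : A → B
    (Γ : Matrix (A × B) (A × B) ℂ) (hΓpos : Γ.PosSemidef)
    (hΓtr : ∀ a a', ∑ b, Γ (a, b) (a', b) = if a = a' then (1 : ℂ) else 0)
    -- an ε-error code
    (M : Type) [Fintype M] [Nonempty M]
    (ρ : M → Matrix A A ℂ)
    (hρpos : ∀ m, (ρ m).PosSemidef) (hρtr : ∀ m, (ρ m).trace = 1)
    (Λ : M → Matrix B B ℂ)
    (hΛpos : ∀ m, (Λ m).PosSemidef) (hΛsum : ∑ m, Λ m = 1)
    (herr : ∀ m, (1 - ε : ℂ) ≤ (((ρ m)ᵀ ⊗ₖ Λ m) * Γ).trace)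
    -- the average encoded state and its positive definite square root
    (ρbar : Matrix A A ℂ) (hρbar : ρbar = (Fintype.card M : ℂ)⁻¹ • ∑ m, ρ m)
    (hρbarpd : ρbar.PosDef)
    (s : Matrix A A ℂ) (hspd : s.PosDef) (hssq : s * s = ρbar) :
    (∃ Θ : M → Matrix A A ℂ,
      (∀ m, (Θ m).PosSemidef) ∧ (∑ m, Θ m = 1)
      ∧ (1 - ε : ℂ) ≤ ((∑ m, Θ m ⊗ₖ Λ m)
          * ((sᵀ ⊗ₖ (1 : Matrix B B ℂ)) * Γ * (sᵀ ⊗ₖ (1 : Matrix B B ℂ)))).trace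
      ∧ ∀ σ : Matrix B B ℂ, σ.trace = 1 →
          ((∑ m, Θ m ⊗ₖ Λ m) * (ρbarᵀ ⊗ₖ σ)).trace = (Fintype.card M : ℂ)⁻¹)
    ∧ (∀ σ : Matrix B B ℂ, σ.PosSemidef → σ.trace = 1 →
        sInf {t : ℝ | ∃ (T : Type) (inst : Fintype T)
            (E : T → Matrix A A ℂ) (F : T → Matrix B B ℂ),
            (∀ x, (E x).PosSemidef) ∧ (∑ x ∈ @Finset.univ T inst, E x = 1)
            ∧ (∀ x, (F x).PosSemidef) ∧ (∑ x ∈ @Finset.univ T inst, F x = 1)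
            ∧ (1 - ε : ℂ) ≤ ((∑ x ∈ @Finset.univ T inst, E x ⊗ₖ F x)
                * ((sᵀ ⊗ₖ (1 : Matrix B B ℂ)) * Γ * (sᵀ ⊗ₖ (1 : Matrix B B ℂ)))).trace
            ∧ t = (((∑ x ∈ @Finset.univ T inst, E x ⊗ₖ F x)
                * (ρbarᵀ ⊗ₖ σ)).trace).re}
          ≤ 1 / (Fintype.card M : ℝ)) := by
  
  classical
  set c : ℂ := (Fintype.card M : ℂ)⁻¹ with hc
  have hcard : (Fintype.card M : ℂ) ≠ 0 := Nat.cast_ne_zero.mpr Fintype.card_ne_zero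
  have hcR : c = (((Fintype.card M : ℝ)⁻¹ : ℝ) : ℂ) := by push_cast [hc]; ring
  have hcnn : (0 : ℂ) ≤ c := by
    rw [hcR]; exact Complex.zero_le_real.mpr (inv_nonneg.mpr (Nat.cast_nonneg _))
  have hsu : IsUnit s.det := (Matrix.isUnit_iff_isUnit_det s).mp hspd.isUnit
  have hsinv1 : s⁻¹ * s = 1 := Matrix.nonsing_inv_mul s hsu
  have hsinv2 : s * s⁻¹ = 1 := Matrix.mul_nonsing_inv s hsu
  have hkey : s⁻¹ * ρbar * s⁻¹ = 1 := by
    rw [← hssq, ← Matrix.mul_assoc, Matrix.mul_assoc (s⁻¹ * s) s s⁻¹, hsinv1, hsinv2, one_mul]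
  have habc : ∀ X : Matrix A A ℂ, s * (s⁻¹ * X * s⁻¹) * s = X := fun X => by
    rw [← Matrix.mul_assoc s (s⁻¹ * X) s⁻¹, ← Matrix.mul_assoc s s⁻¹ X,
      Matrix.mul_assoc (s * s⁻¹ * X) s⁻¹ s, hsinv1, hsinv2, Matrix.mul_one, Matrix.one_mul]
  set Θ : M → Matrix A A ℂ := fun m => c • (s⁻¹ * ρ m * s⁻¹)ᵀ with hΘ
  have hΘpsd : ∀ m, (Θ m).PosSemidef := by
    intro m
    have h1 : (s⁻¹ * ρ m * s⁻¹).PosSemidef := by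
      have h2 := (hρpos m).conjTranspose_mul_mul_same (B := s⁻¹)
      rwa [hspd.inv.isHermitian.eq] at h2
    rw [hΘ]; dsimp only; rw [hcR]
    exact psd_smul h1.transpose (inv_nonneg.mpr (Nat.cast_nonneg _))
  have hΘsum : ∑ m, Θ m = 1 := by
    have : ∑ m, Θ m = (s⁻¹ * ((Fintype.card M : ℂ)⁻¹ • ∑ m, ρ m) * s⁻¹)ᵀ := by
      rw [hΘ]
      simp only [Matrix.smul_mul, Matrix.mul_smul, Matrix.transpose_smul, Finset.mul_sum,
        Finset.sum_mul, Matrix.transpose_sum, Finset.smul_sum, hc]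
    rw [this, ← hρbar, hkey, Matrix.transpose_one]
  have hsΘs : ∀ m, sᵀ * Θ m * sᵀ = c • (ρ m)ᵀ := by
    intro m
    rw [hΘ]; dsimp only
    rw [Matrix.mul_smul, Matrix.smul_mul]
    congr 1
    rw [← Matrix.transpose_mul, ← Matrix.transpose_mul, ← Matrix.mul_assoc s (s⁻¹ * ρ m * s⁻¹) s, habc]
  have hconj : ∀ m, (sᵀ ⊗ₖ (1 : Matrix B B ℂ)) * (Θ m ⊗ₖ Λ m) * (sᵀ ⊗ₖ (1 : Matrix B B ℂ))
      = c • ((ρ m)ᵀ ⊗ₖ Λ m) := by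
    intro m
    rw [← Matrix.mul_kronecker_mul, ← Matrix.mul_kronecker_mul, hsΘs,
      Matrix.one_mul, Matrix.mul_one, Matrix.smul_kronecker]
  have hterm : ∀ m, ((Θ m ⊗ₖ Λ m) *
      ((sᵀ ⊗ₖ (1 : Matrix B B ℂ)) * Γ * (sᵀ ⊗ₖ (1 : Matrix B B ℂ)))).trace
      = c * (((ρ m)ᵀ ⊗ₖ Λ m) * Γ).trace := by
    intro m
    rw [show (Θ m ⊗ₖ Λ m) * ((sᵀ ⊗ₖ (1 : Matrix B B ℂ)) * Γ * (sᵀ ⊗ₖ (1 : Matrix B B ℂ)))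
        = ((Θ m ⊗ₖ Λ m) * (sᵀ ⊗ₖ (1 : Matrix B B ℂ))) * Γ * (sᵀ ⊗ₖ (1 : Matrix B B ℂ)) from by
      simp only [Matrix.mul_assoc]]
    rw [Matrix.trace_mul_cycle, ← Matrix.mul_assoc, hconj, Matrix.smul_mul,
      Matrix.trace_smul, smul_eq_mul]
  have hpart1 : (1 - ε : ℂ) ≤ ((∑ m, Θ m ⊗ₖ Λ m)
      * ((sᵀ ⊗ₖ (1 : Matrix B B ℂ)) * Γ * (sᵀ ⊗ₖ (1 : Matrix B B ℂ)))).trace := by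
    rw [Finset.sum_mul, Matrix.trace_sum]
    have hconst : ∑ _m : M, c * ((1 : ℂ) - ε) = (1 - ε : ℂ) := by
      rw [Finset.sum_const, Finset.card_univ, nsmul_eq_mul, ← mul_assoc,
        mul_inv_cancel₀ hcard, one_mul]
    calc (1 - ε : ℂ) = ∑ _m : M, c * ((1 : ℂ) - ε) := hconst.symm
      _ ≤ ∑ m, ((Θ m ⊗ₖ Λ m) *
          ((sᵀ ⊗ₖ (1 : Matrix B B ℂ)) * Γ * (sᵀ ⊗ₖ (1 : Matrix B B ℂ)))).trace := by
        apply Finset.sum_le_sum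
        intro m _
        rw [hterm m]
        exact mul_le_mul_of_nonneg_left (herr m) hcnn
  have hpart2 : ∀ σ : Matrix B B ℂ, σ.trace = 1 →
      ((∑ m, Θ m ⊗ₖ Λ m) * (ρbarᵀ ⊗ₖ σ)).trace = c := by
    intro σ hσ
    rw [Finset.sum_mul, Matrix.trace_sum]
    have hterm2 : ∀ m, ((Θ m ⊗ₖ Λ m) * (ρbarᵀ ⊗ₖ σ)).trace = c * (Λ m * σ).trace := by
      intro m
      rw [← Matrix.mul_kronecker_mul, Matrix.trace_kronecker]
      have h1 : (Θ m * ρbarᵀ).trace = c := by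
        rw [hΘ]; dsimp only
        rw [Matrix.smul_mul, Matrix.trace_smul, ← Matrix.transpose_mul,
          Matrix.trace_transpose, ← Matrix.mul_assoc ρbar (s⁻¹ * ρ m) s⁻¹,
          ← Matrix.mul_assoc ρbar s⁻¹ (ρ m), Matrix.trace_mul_cycle,
          ← Matrix.mul_assoc s⁻¹ ρbar s⁻¹,
          hkey, Matrix.one_mul, hρtr m, smul_eq_mul, mul_one]
      rw [h1]
    rw [Finset.sum_congr rfl fun m _ => hterm2 m, ← Finset.mul_sum, ← Matrix.trace_sum,
      ← Finset.sum_mul, hΛsum, Matrix.one_mul, hσ, mul_one]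
  constructor
  · exact ⟨Θ, hΘpsd, hΘsum, hpart1, hpart2⟩
  · intro σ hσpsd hσtr
    apply csInf_le
    · refine ⟨0, ?_⟩
      rintro t ⟨T, inst, E, F, hE, hEsum, hF, hFsum, hineq, ht⟩
      have hΩ : (∑ x ∈ @Finset.univ T inst, E x ⊗ₖ F x).PosSemidef :=
        psd_sum _ _ fun x _ => psd_kron (hE x) (hF x)
      have hprod : (ρbarᵀ ⊗ₖ σ).PosSemidef :=
        psd_kron hρbarpd.posSemidef.transpose hσpsd
      have h0 := trace_mul_psd_nonneg hΩ hprod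
      rw [ht]
      simpa using (Complex.le_def.mp h0).1
    · refine ⟨M, inferInstance, Θ, Λ, hΘpsd, hΘsum, hΛpos, hΛsum, hpart1, ?_⟩
      rw [hpart2 σ hσtr, hcR]
      simp [one_div]
end
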